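/- Let λ > 0. There exists a constant C > 0 depending only on λ (in particular independent of ε) such that for every ε ∈ (0,1], every pair (u,v) and every pair (u*,v*) with u,u* ∈ C²([0,1]) satisfying u(0)=u'(0)=u(1)=u'(1)=0 and u*(0)=u*'(0)=u*(1)=u*'(1)=0 and v,v* ∈ C²([0,1]), one has |B((u,v),(u*,v*))| ≤ C ⦀(u,v)⦀ · ⦀(u*,v*)⦀. -/

import Mathlib

/-! Both pairs are sent to `L²(0,1)`, where `B` is a combination of inner products and each one is
bounded by Cauchy–Schwarz against the balanced norm, which controls `‖u‖`, `ε^{3/2}‖u''‖`, `‖v‖`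
and `ε²‖v''‖`. The one term out of reach is `ε^{3/2}⟨4u, v*''⟩`; integrating by parts twice, with
the clamped conditions on `u`, turns it into `ε^{3/2}⟨4u'', v*⟩`. The remaining scalings are
absorbed by `ε^{5/2} ≤ ε²` and `ε^{3/2} ε^{5/2} = (ε²)²`, giving `C = 4λ + 25`. -/

open MeasureTheory Set Real

noncomputable section

/-- L²(0,1) inner product. -/
def L2ip (f g : ℝ → ℝ) : ℝ := ∫ x in (0:ℝ)..1, f x * g x

/-- Square of the L²(0,1) norm. -/
def L2nsq (f : ℝ → ℝ) : ℝ := ∫ x in (0:ℝ)..1, (f x)^2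

/-- k-th derivative within [0,1]. -/
def Dn (k : ℕ) (f : ℝ → ℝ) : ℝ → ℝ := iteratedDerivWithin k f (Icc (0:ℝ) 1)

/-- The bilinear form B. -/
def Bform (ε lam : ℝ) (u v us vs : ℝ → ℝ) : ℝ :=
  lam * L2ip (fun x => v x - ε ^ ((3:ℝ)/2) * Dn 2 u x)
             (fun x => vs x - ε ^ ((3:ℝ)/2) * Dn 2 us x)
  + L2ip (fun x => ε ^ ((5:ℝ)/2) * Dn 2 v x + 4 * u x)
         (fun x => ε ^ ((3:ℝ)/2) * Dn 2 vs x + 4 * us x)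

/-- The balanced norm. -/
def bal (ε : ℝ) (u v : ℝ → ℝ) : ℝ :=
  Real.sqrt (L2nsq u + ε^3 * L2nsq (Dn 2 u) + L2nsq v + ε^4 * L2nsq (Dn 2 v))

/-- Clamped boundary conditions u(0)=u'(0)=u(1)=u'(1)=0. -/
def ClampedBC (u : ℝ → ℝ) : Prop :=
  u 0 = 0 ∧ Dn 1 u 0 = 0 ∧ u 1 = 0 ∧ Dn 1 u 1 = 0

open scoped RealInnerProductSpace

theorem ContinuousOn.memLp_restrict_of_isCompact {X E : Type*} [TopologicalSpace X] [T2Space X]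
    [MeasurableSpace X] [OpensMeasurableSpace X] [NormedAddCommGroup E]
    [SecondCountableTopologyEither X E]
    {μ : Measure X} [IsFiniteMeasureOnCompacts μ] {K : Set X} {f : X → E} {p : ENNReal}
    (hK : IsCompact K) (hf : ContinuousOn f K) : MemLp f p (μ.restrict K) := by
  obtain ⟨C, hC⟩ := hK.exists_bound_of_continuousOn hf
  have : IsFiniteMeasure (μ.restrict K) := isFiniteMeasure_restrict.mpr hK.measure_ne_top
  exact (memLp_top_of_bound (hf.aestronglyMeasurable hK.measurableSet) C
    ((ae_restrict_iff' hK.measurableSet).mpr (ae_of_all _ hC))).mono_exponent le_top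

theorem ContDiffOn.hasDerivWithinAt_iteratedDerivWithin {𝕜 F : Type*} [NontriviallyNormedField 𝕜]
    [NormedAddCommGroup F] [NormedSpace 𝕜 F] {n : WithTop ℕ∞} {m : ℕ} {f : 𝕜 → F} {s : Set 𝕜}
    {x : 𝕜} (hf : ContDiffOn 𝕜 n f s) (hmn : m < n) (hs : UniqueDiffOn 𝕜 s) (hx : x ∈ s) :
    HasDerivWithinAt (iteratedDerivWithin m f s) (iteratedDerivWithin (m + 1) f s x) s x := by
  rw [iteratedDerivWithin_succ]
  exact (hf.differentiableOn_iteratedDerivWithin hmn hs x hx).hasDerivWithinAt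

local notation "μ₀₁" => volume.restrict (Icc (0:ℝ) 1)

theorem L2ip_eq_inner {f g : ℝ → ℝ} (hf : MemLp f 2 μ₀₁) (hg : MemLp g 2 μ₀₁) :
    L2ip f g = ⟪hf.toLp f, hg.toLp g⟫ := by
  rw [L2.inner_def, L2ip, intervalIntegral.integral_of_le zero_le_one,
    ← integral_Icc_eq_integral_Ioc]
  refine integral_congr_ae ?_
  filter_upwards [hf.coeFn_toLp, hg.coeFn_toLp] with x hfx hgx
  rw [hfx, hgx, Real.inner_apply]

theorem L2nsq_eq_norm_sq {f : ℝ → ℝ} (hf : MemLp f 2 μ₀₁) : L2nsq f = ‖hf.toLp f‖ ^ 2 := by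
  rw [← real_inner_self_eq_norm_sq, ← L2ip_eq_inner, L2ip, L2nsq]
  simp only [sq]

theorem continuousOn_Dn {f : ℝ → ℝ} {k : ℕ} (hf : ContDiffOn ℝ 2 f (Icc 0 1)) (hk : k ≤ 2) :
    ContinuousOn (Dn k f) (Icc 0 1) :=
  hf.continuousOn_iteratedDerivWithin (by exact_mod_cast hk) (uniqueDiffOn_Icc one_pos)

theorem memLp_and_memLp_Dn_two {f : ℝ → ℝ} (hf : ContDiffOn ℝ 2 f (Icc 0 1)) :
    MemLp f 2 μ₀₁ ∧ MemLp (Dn 2 f) 2 μ₀₁ :=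
  ⟨hf.continuousOn.memLp_restrict_of_isCompact isCompact_Icc,
    (continuousOn_Dn hf le_rfl).memLp_restrict_of_isCompact isCompact_Icc⟩

theorem hasDerivWithinAt_Dn {f : ℝ → ℝ} {k : ℕ} {x : ℝ} (hf : ContDiffOn ℝ 2 f (Icc 0 1))
    (hk : k < 2) (hx : x ∈ Icc (0:ℝ) 1) :
    HasDerivWithinAt (Dn k f) (Dn (k + 1) f x) (Icc 0 1) x :=
  hf.hasDerivWithinAt_iteratedDerivWithin (by exact_mod_cast hk) (uniqueDiffOn_Icc one_pos) hx

theorem L2ip_Dn_two_right_eq {f g : ℝ → ℝ} (hf : ContDiffOn ℝ 2 f (Icc 0 1))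
    (hg : ContDiffOn ℝ 2 g (Icc 0 1)) :
    L2ip f (Dn 2 g) = f 1 * Dn 1 g 1 - f 0 * Dn 1 g 0 - ∫ x in (0:ℝ)..1, Dn 1 f x * Dn 1 g x := by
  have hI : uIcc (0:ℝ) 1 = Icc 0 1 := uIcc_of_le zero_le_one
  refine intervalIntegral.integral_mul_deriv_eq_deriv_mul_of_hasDerivWithinAt
    (fun x hx => ?_) (fun x hx => ?_) ?_ ?_
  · rw [hI] at hx ⊢
    simpa only [Dn, iteratedDerivWithin_zero] using hasDerivWithinAt_Dn (k := 0) hf two_pos hx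
  · rw [hI] at hx ⊢
    exact hasDerivWithinAt_Dn hg one_lt_two hx
  · exact (continuousOn_Dn hf one_le_two).intervalIntegrable_of_Icc zero_le_one
  · exact (continuousOn_Dn hg le_rfl).intervalIntegrable_of_Icc zero_le_one

theorem ClampedBC.L2ip_Dn_two_comm {u w : ℝ → ℝ} (hbc : ClampedBC u)
    (hu : ContDiffOn ℝ 2 u (Icc 0 1)) (hw : ContDiffOn ℝ 2 w (Icc 0 1)) :
    L2ip u (Dn 2 w) = L2ip (Dn 2 u) w := by
  obtain ⟨h0, h0', h1, h1'⟩ := hbc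
  have hcomm : L2ip (Dn 2 u) w = L2ip w (Dn 2 u) := by simp only [L2ip, mul_comm]
  rw [hcomm, L2ip_Dn_two_right_eq hu hw, L2ip_Dn_two_right_eq hw hu, h0, h0', h1, h1']
  simp only [mul_comm]
  ring

section InnerProduct

variable {E : Type*} [NormedAddCommGroup E] [InnerProductSpace ℝ E]

theorem abs_real_inner_le_of_norm_le {x y : E} {P Q : ℝ} (hx : ‖x‖ ≤ P) (hy : ‖y‖ ≤ Q) :
    |⟪x, y⟫| ≤ P * Q :=
  (abs_real_inner_le_norm x y).trans (mul_le_mul hx hy (norm_nonneg _) ((norm_nonneg _).trans hx))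

theorem abs_inner_sub_smul_sub_smul_le {a P Q : ℝ} {v U vs Us : E} (hv : ‖v‖ ≤ P)
    (hU : ‖a • U‖ ≤ P) (hvs : ‖vs‖ ≤ Q) (hUs : ‖a • Us‖ ≤ Q) :
    |⟪v - a • U, vs - a • Us⟫| ≤ 4 * (P * Q) := by
  have h := abs_real_inner_le_of_norm_le ((norm_sub_le v (a • U)).trans (add_le_add hv hU))
    ((norm_sub_le vs (a • Us)).trans (add_le_add hvs hUs))
  linarith

theorem abs_inner_smul_add_smul_le {a b c P Q : ℝ} {u U V us vs Vs : E} (hb : 0 ≤ b)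
    (hbc : b ≤ c) (habc : a * b = c * c) (hu : ‖u‖ ≤ P) (hU : ‖a • U‖ ≤ P) (hV : ‖c • V‖ ≤ P)
    (hus : ‖us‖ ≤ Q) (hvs : ‖vs‖ ≤ Q) (hVs : ‖c • Vs‖ ≤ Q) (hparts : ⟪u, Vs⟫ = ⟪U, vs⟫) :
    |⟪b • V + (4:ℝ) • u, a • Vs + (4:ℝ) • us⟫| ≤ 25 * (P * Q) := by
  have hsplit : ⟪b • V + (4:ℝ) • u, a • Vs + (4:ℝ) • us⟫
      = 4 * ⟪b • V + (4:ℝ) • u, us⟫ + ⟪c • V, c • Vs⟫ + 4 * ⟪a • U, vs⟫ := by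
    simp only [inner_add_left, inner_add_right, real_inner_smul_left, real_inner_smul_right,
      ← hparts]
    linear_combination ⟪V, Vs⟫ * habc
  have hbV : ‖b • V + (4:ℝ) • u‖ ≤ 5 * P := by
    have : ‖b • V‖ ≤ ‖c • V‖ := by
      rw [norm_smul, norm_smul, Real.norm_of_nonneg hb, Real.norm_of_nonneg (hb.trans hbc)]
      exact mul_le_mul_of_nonneg_right hbc (norm_nonneg V)
    calc ‖b • V + (4:ℝ) • u‖ ≤ ‖b • V‖ + 4 * ‖u‖ := by
          simpa [norm_smul] using norm_add_le (b • V) ((4:ℝ) • u)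
      _ ≤ 5 * P := by linarith
  rw [hsplit]
  have h1 := abs_real_inner_le_of_norm_le hbV hus
  have h2 := abs_real_inner_le_of_norm_le hV hVs
  have h3 := abs_real_inner_le_of_norm_le hU hvs
  have := abs_add_three (4 * ⟪b • V + (4:ℝ) • u, us⟫) ⟪c • V, c • Vs⟫ (4 * ⟪a • U, vs⟫)
  rw [abs_mul, abs_mul, abs_of_pos (four_pos : (0:ℝ) < 4)] at this
  linarith

end InnerProduct

theorem norm_toLp_le_bal {ε : ℝ} {u v : ℝ → ℝ} (hε : 0 ≤ ε) (hu : MemLp u 2 μ₀₁)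
    (hU : MemLp (Dn 2 u) 2 μ₀₁) (hv : MemLp v 2 μ₀₁) (hV : MemLp (Dn 2 v) 2 μ₀₁) :
    ‖hu.toLp u‖ ≤ bal ε u v ∧ ‖ε ^ ((3:ℝ)/2) • hU.toLp (Dn 2 u)‖ ≤ bal ε u v ∧
      ‖hv.toLp v‖ ≤ bal ε u v ∧ ‖ε ^ 2 • hV.toLp (Dn 2 v)‖ ≤ bal ε u v := by
  have hy : ‖ε ^ ((3:ℝ)/2) • hU.toLp (Dn 2 u)‖ ^ 2 = ε ^ 3 * L2nsq (Dn 2 u) := by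
    rw [L2nsq_eq_norm_sq hU, norm_smul, mul_pow, Real.norm_of_nonneg (by positivity),
      ← Real.rpow_mul_natCast hε, ← Real.rpow_natCast]
    norm_num
  have hw : ‖ε ^ 2 • hV.toLp (Dn 2 v)‖ ^ 2 = ε ^ 4 * L2nsq (Dn 2 v) := by
    rw [L2nsq_eq_norm_sq hV, norm_smul, mul_pow, Real.norm_of_nonneg (by positivity)]
    ring
  set x := ‖hu.toLp u‖
  set y := ‖ε ^ ((3:ℝ)/2) • hU.toLp (Dn 2 u)‖
  set z := ‖hv.toLp v‖
  set w := ‖ε ^ 2 • hV.toLp (Dn 2 v)‖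
  have hbal : bal ε u v = √(x ^ 2 + y ^ 2 + z ^ 2 + w ^ 2) := by
    rw [bal, hy, hw, L2nsq_eq_norm_sq hu, L2nsq_eq_norm_sq hv]
  rw [hbal]
  refine ⟨?_, ?_, ?_, ?_⟩ <;> apply Real.le_sqrt_of_sq_le <;>
    linarith [sq_nonneg x, sq_nonneg y, sq_nonneg z, sq_nonneg w]

theorem Bform_eq_inner {ε lam : ℝ} {u v us vs : ℝ → ℝ} (hu : MemLp u 2 μ₀₁)
    (hU : MemLp (Dn 2 u) 2 μ₀₁) (hv : MemLp v 2 μ₀₁) (hV : MemLp (Dn 2 v) 2 μ₀₁)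
    (hus : MemLp us 2 μ₀₁) (hUs : MemLp (Dn 2 us) 2 μ₀₁) (hvs : MemLp vs 2 μ₀₁)
    (hVs : MemLp (Dn 2 vs) 2 μ₀₁) :
    Bform ε lam u v us vs =
      lam * ⟪hv.toLp v - ε ^ ((3:ℝ)/2) • hU.toLp (Dn 2 u),
        hvs.toLp vs - ε ^ ((3:ℝ)/2) • hUs.toLp (Dn 2 us)⟫ +
      ⟪ε ^ ((5:ℝ)/2) • hV.toLp (Dn 2 v) + (4:ℝ) • hu.toLp u,
        ε ^ ((3:ℝ)/2) • hVs.toLp (Dn 2 vs) + (4:ℝ) • hus.toLp us⟫ := by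
  have hB : Bform ε lam u v us vs =
      lam * L2ip (v - ε ^ ((3:ℝ)/2) • Dn 2 u) (vs - ε ^ ((3:ℝ)/2) • Dn 2 us) +
      L2ip (ε ^ ((5:ℝ)/2) • Dn 2 v + (4:ℝ) • u) (ε ^ ((3:ℝ)/2) • Dn 2 vs + (4:ℝ) • us) := rfl
  rw [hB, L2ip_eq_inner (hv.sub (hU.const_smul _)) (hvs.sub (hUs.const_smul _)),
    L2ip_eq_inner ((hV.const_smul _).add (hu.const_smul _))
      ((hVs.const_smul _).add (hus.const_smul _))]
  rfl

/-- Uniform (in ε) continuity of the bilinear form B with respect to the balanced norm. -/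
theorem continuity_Bform (lam : ℝ) (hlam : 0 < lam) :
    ∃ C > 0, ∀ ε ∈ Ioc (0:ℝ) 1, ∀ u v us vs : ℝ → ℝ,
      ContDiffOn ℝ 2 u (Icc (0:ℝ) 1) → ClampedBC u →
      ContDiffOn ℝ 2 us (Icc (0:ℝ) 1) → ClampedBC us →
      ContDiffOn ℝ 2 v (Icc (0:ℝ) 1) →
      ContDiffOn ℝ 2 vs (Icc (0:ℝ) 1) →
      |Bform ε lam u v us vs| ≤ C * bal ε u v * bal ε us vs := by
  refine ⟨4 * lam + 25, by positivity, ?_⟩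
  rintro ε ⟨hε0, hε1⟩ u v us vs hu hbcu hus - hv hvs
  obtain ⟨mu, mU⟩ := memLp_and_memLp_Dn_two hu
  obtain ⟨mv, mV⟩ := memLp_and_memLp_Dn_two hv
  obtain ⟨mus, mUs⟩ := memLp_and_memLp_Dn_two hus
  obtain ⟨mvs, mVs⟩ := memLp_and_memLp_Dn_two hvs
  obtain ⟨hu₁, hU₁, hv₁, hV₁⟩ := norm_toLp_le_bal hε0.le mu mU mv mV
  obtain ⟨hus₁, hUs₁, hvs₁, hVs₁⟩ := norm_toLp_le_bal hε0.le mus mUs mvs mVs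
  have hparts := hbcu.L2ip_Dn_two_comm hu hvs
  rw [L2ip_eq_inner mu mVs, L2ip_eq_inner mU mvs] at hparts
  have hab : ε ^ ((3:ℝ)/2) * ε ^ ((5:ℝ)/2) = ε ^ 2 * ε ^ 2 := by
    rw [← Real.rpow_add hε0, ← pow_add, ← Real.rpow_natCast]
    norm_num
  have hbc : ε ^ ((5:ℝ)/2) ≤ ε ^ 2 := by
    rw [← Real.rpow_natCast]
    exact Real.rpow_le_rpow_of_exponent_ge hε0 hε1 (by norm_num)
  rw [Bform_eq_inner mu mU mv mV mus mUs mvs mVs]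
  have h₁ := abs_inner_sub_smul_sub_smul_le hv₁ hU₁ hvs₁ hUs₁
  have h₂ := abs_inner_smul_add_smul_le (by positivity) hbc hab hu₁ hU₁ hV₁ hus₁ hvs₁ hVs₁ hparts
  calc _ ≤ lam * |_| + |_| := by
        simpa only [abs_mul, abs_of_pos hlam] using abs_add_le (lam * _) _
    _ ≤ lam * (4 * (bal ε u v * bal ε us vs)) + 25 * (bal ε u v * bal ε us vs) := by gcongr
    _ = _ := by ring
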